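/- arXiv:2504.02336 — 2 statements merged into one kernel-verified Lean document; each statement's English description precedes it below -/
import Mathlib

section
/- Let d = (d_{γρ}) be a real 3×3 matrix, let U be a neighbourhood of the origin in ℝ³, and suppose F : U → ℝ is continuous at 0 and satisfies F(y) = ∑_{γ,ρ} d_{γρ} y_γ y_ρ/|y|² for all y ∈ U with y ≠ 0. Then the symmetric part of d is a multiple of the identity, namely d_{γρ} + d_{ργ} = (2 tr(d)/3) δ_{γρ} for all γ, ρ, and F(0) = tr(d)/3. -/
/-!
The ratio `∑ d γ ρ y γ y ρ / ‖y‖²` is constant on each ray `t • u`, `t > 0`, and these rays run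
into the origin, so continuity of `F` at `0` forces the ratio to equal `F 0` everywhere: the
quadratic form of `d` is `F 0 · ‖y‖²`. Testing it on `e γ` and on `e γ + e ρ` gives
`d γ γ = F 0` and `d γ ρ + d ρ γ = 0` for `γ ≠ ρ`, hence `tr d = 3 F 0`.
-/

open Filter Topology

theorem eq_of_continuousAt_of_eventuallyEq_of_smul_invariant
    {E β : Type*} [AddCommGroup E] [Module ℝ E] [TopologicalSpace E] [ContinuousSMul ℝ E]
    [TopologicalSpace β] [T2Space β] {F g : E → β} (hF : ContinuousAt F 0)
    (hFg : F =ᶠ[𝓝[≠] 0] g) (hg : ∀ c : ℝ, 0 < c → ∀ y, g (c • y) = g y) {u : E} (hu : u ≠ 0) :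
    g u = F 0 := by
  have hray : Tendsto (fun c : ℝ => c • u) (𝓝[>] 0) (𝓝[≠] 0) := by
    refine tendsto_nhdsWithin_of_tendsto_nhds_of_eventually_within _ ?_ ?_
    · exact (((continuous_id (X := ℝ)).smul (continuous_const (y := u))).tendsto' 0 0
        (zero_smul ℝ u)).mono_left nhdsWithin_le_nhds
    · filter_upwards [self_mem_nhdsWithin] with c hc
      exact smul_ne_zero (ne_of_gt hc) hu
  refine tendsto_nhds_unique ?_ (hF.tendsto.comp (hray.mono_right nhdsWithin_le_nhds))
  refine tendsto_const_nhds.congr' ?_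
  filter_upwards [hray.eventually hFg, self_mem_nhdsWithin] with c hc hpos
  simp [hc, hg c hpos]

namespace Matrix

variable {n R : Type*} [Fintype n] [DecidableEq n] [CommRing R] {d : Matrix n n R} {c : R}

theorem diag_eq_of_forall_sum_mul_eq
    (h : ∀ u : n → R, ∑ i, ∑ j, d i j * u i * u j = c * ∑ i, u i ^ 2) (i : n) : d i i = c := by
  simpa [Pi.single_apply] using h (Pi.single i 1)

theorem add_transpose_apply_eq_zero_of_forall_sum_mul_eq
    (h : ∀ u : n → R, ∑ i, ∑ j, d i j * u i * u j = c * ∑ i, u i ^ 2) {i j : n} (hij : i ≠ j) :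
    d i j + d j i = 0 := by
  have hsum := h (Pi.single i 1 + Pi.single j 1)
  simp [Pi.single_apply, add_sq, mul_add, Finset.sum_add_distrib, hij.symm] at hsum
  linear_combination hsum - diag_eq_of_forall_sum_mul_eq h i - diag_eq_of_forall_sum_mul_eq h j

end Matrix

theorem sum_sum_mul_div_norm_sq_smul {n : Type*} [Fintype n] (d : Matrix n n ℝ) {c : ℝ}
    (hc : c ≠ 0) (y : EuclideanSpace ℝ n) :
    ∑ i, ∑ j, d i j * (c • y) i * (c • y) j / ‖c • y‖ ^ 2 =
      ∑ i, ∑ j, d i j * y i * y j / ‖y‖ ^ 2 := by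
  simp only [PiLp.smul_apply, smul_eq_mul, norm_smul, mul_pow, Real.norm_eq_abs, sq_abs]
  refine Finset.sum_congr rfl fun i _ => Finset.sum_congr rfl fun j _ => ?_
  rw [show d i j * (c * y i) * (c * y j) = c ^ 2 * (d i j * y i * y j) by ring,
    mul_div_mul_left _ _ (pow_ne_zero 2 hc)]

theorem singular_part_uniqueness
    (d : Matrix (Fin 3) (Fin 3) ℝ)
    (U : Set (EuclideanSpace ℝ (Fin 3))) (hU : U ∈ nhds (0 : EuclideanSpace ℝ (Fin 3)))
    (F : EuclideanSpace ℝ (Fin 3) → ℝ) (hF : ContinuousAt F 0)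
    (hFd : ∀ y ∈ U, y ≠ 0 → F y = ∑ γ, ∑ ρ, d γ ρ * y γ * y ρ / ‖y‖ ^ 2) :
    (∀ γ ρ, d γ ρ + d ρ γ = (2 * d.trace / 3) * (if γ = ρ then 1 else 0)) ∧
    F 0 = d.trace / 3 := by
  have hquad : ∀ v : Fin 3 → ℝ, ∑ i, ∑ j, d i j * v i * v j = F 0 * ∑ i, v i ^ 2 := by
    intro v
    rcases eq_or_ne v 0 with rfl | hv
    · simp
    have hu : WithLp.toLp 2 v ≠ 0 := by simpa using hv
    have hratio := eq_of_continuousAt_of_eventuallyEq_of_smul_invariant hF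
      (eventually_nhdsWithin_iff.2 (by filter_upwards [hU] with y hy hy0 using hFd y hy hy0))
      (fun c hc y => sum_sum_mul_div_norm_sq_smul d hc.ne' y) hu
    simp_rw [← Finset.sum_div] at hratio
    rw [div_eq_iff (by simpa using hu), EuclideanSpace.norm_sq_eq] at hratio
    simpa [sq_abs] using hratio
  have hdiag := Matrix.diag_eq_of_forall_sum_mul_eq hquad
  have htrace : d.trace = 3 * F 0 := by simp [Matrix.trace, hdiag]
  refine ⟨fun γ ρ => ?_, by rw [htrace]; ring⟩
  split_ifs with h
  · subst h
    rw [hdiag, htrace]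
    ring
  · simp [Matrix.add_transpose_apply_eq_zero_of_forall_sum_mul_eq hquad h]
end

section
/- Let Γ : ℝ³ → ℝ^{3×3×3}, x ↦ (Γ^α{}_{βμ}(x)), be smooth with Γ(0) = 0. Fix V ∈ ℝ³, and for x ∈ ℝ³ let u_x : [0,1] → ℝ³ be the solution of the linear ODE (d/dt) u_x^α(t) = − x^β Γ^α{}_{βμ}(t x) u_x^μ(t) with u_x(0) = V. Then, as x → 0, u_x(1)^α = V^α − (1/2) ∂_ν Γ^α{}_{βμ}(0) x^ν x^β V^μ − (1/6) ∂_σ ∂_ν Γ^α{}_{βμ}(0) x^σ x^ν x^β V^μ + O(|x|⁴). -/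
set_option maxHeartbeats 1000000

open Asymptotics

noncomputable section

lemma clm_sum {F : Type*} [NormedAddCommGroup F] [NormedSpace ℝ F]
    (D : (Fin 3 → ℝ) →L[ℝ] F) (x : Fin 3 → ℝ) :
    D x = ∑ ν, x ν • D (Pi.single ν 1) := by
  conv_lhs => rw [← Finset.univ_sum_single x]
  rw [map_sum]
  refine Finset.sum_congr rfl fun ν _ => ?_
  have h : Pi.single ν (x ν) = x ν • (Pi.single ν 1 : Fin 3 → ℝ) := by
    ext j
    rcases eq_or_ne j ν with h | h <;> simp [h, Pi.single_apply]
  rw [h, map_smul]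

lemma comp_abs_le (w : Fin 3 → Fin 3 → Fin 3 → ℝ) (α β μ : Fin 3) : |w α β μ| ≤ ‖w‖ := by
  calc |w α β μ| = ‖w α β μ‖ := (Real.norm_eq_abs _).symm
    _ ≤ ‖w α β‖ := norm_le_pi_norm _ μ
    _ ≤ ‖w α‖ := norm_le_pi_norm _ β
    _ ≤ ‖w‖ := norm_le_pi_norm _ α

lemma vec_abs_le (w : Fin 3 → ℝ) (β : Fin 3) : |w β| ≤ ‖w‖ := by
  calc |w β| = ‖w β‖ := (Real.norm_eq_abs _).symm
    _ ≤ ‖w‖ := norm_le_pi_norm _ β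

lemma cubic_remainder (Γ : (Fin 3 → ℝ) → (Fin 3 → Fin 3 → Fin 3 → ℝ))
    (hΓ : ContDiff ℝ (⊤ : ℕ∞) Γ) (hΓ0 : Γ 0 = 0) :
    ∃ L r : ℝ, 0 < r ∧ 0 ≤ L ∧ ∀ y : Fin 3 → ℝ, ‖y‖ ≤ r →
      ‖Γ y - fderiv ℝ Γ 0 y - (1/2 : ℝ) • fderiv ℝ (fderiv ℝ Γ) 0 y y‖ ≤ L * ‖y‖^3 := by
  have hΓ1 : ContDiff ℝ (⊤ : ℕ∞) (fderiv ℝ Γ) := hΓ.fderiv_right (by simp)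
  have hΓ2 : ContDiff ℝ (⊤ : ℕ∞) (fderiv ℝ (fderiv ℝ Γ)) := hΓ1.fderiv_right (by simp)
  obtain ⟨L, t, ht, hL⟩ := ((hΓ2.contDiffAt (x := 0)).of_le (by simp)).exists_lipschitzOnWith
  obtain ⟨r, hr, hball⟩ := Metric.mem_nhds_iff.1 ht
  set B := fderiv ℝ (fderiv ℝ Γ) 0 with hBdef
  have hsym : ∀ v w, B v w = B w v := fun v w =>
    second_derivative_symmetric (f := Γ) (fun y => (hΓ.differentiable (by simp) y).hasFDerivAt)
      ((hΓ1.differentiable (by simp) 0).hasFDerivAt) v w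
  set g : (Fin 3 → ℝ) → (Fin 3 → Fin 3 → Fin 3 → ℝ) :=
    fun y => Γ y - fderiv ℝ Γ 0 y - (1/2 : ℝ) • B y y with hgdef
  have hg : ∀ z, HasFDerivAt g (fderiv ℝ Γ z - fderiv ℝ Γ 0 - B z) z := by
    intro z
    have h1 : HasFDerivAt Γ (fderiv ℝ Γ z) z := (hΓ.differentiable (by simp) z).hasFDerivAt
    have h2 : HasFDerivAt (fun y : Fin 3 → ℝ => fderiv ℝ Γ 0 y) (fderiv ℝ Γ 0) z :=
      (fderiv ℝ Γ 0).hasFDerivAt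
    have hbb : IsBoundedBilinearMap ℝ (fun p : (Fin 3 → ℝ) × (Fin 3 → ℝ) => B p.1 p.2) :=
      B.isBoundedBilinearMap
    have h3 : HasFDerivAt (fun y : Fin 3 → ℝ => B y y)
        ((hbb.deriv (z, z)).comp
          ((ContinuousLinearMap.id ℝ (Fin 3 → ℝ)).prod (ContinuousLinearMap.id ℝ (Fin 3 → ℝ)))) z := by
      have hinner : HasFDerivAt (fun y : Fin 3 → ℝ => (y, y))
          ((ContinuousLinearMap.id ℝ (Fin 3 → ℝ)).prod (ContinuousLinearMap.id ℝ (Fin 3 → ℝ))) z :=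
        (hasFDerivAt_id z).prodMk (hasFDerivAt_id z)
      exact HasFDerivAt.comp (f := fun y : Fin 3 → ℝ => (y, y)) z (hbb.hasFDerivAt (z, z)) hinner
    have h4 := (h1.sub h2).sub (h3.const_smul (1/2 : ℝ))
    refine h4.congr_fderiv ?_
    ext w
    simp only [ContinuousLinearMap.coe_sub', Pi.sub_apply, ContinuousLinearMap.coe_smul',
      Pi.smul_apply, ContinuousLinearMap.coe_comp', Function.comp_apply,
      ContinuousLinearMap.prod_apply, ContinuousLinearMap.coe_id', id_eq,
      IsBoundedBilinearMap.deriv_apply]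
    rw [hsym w z]
    simp only [Pi.smul_apply, Pi.add_apply, smul_eq_mul, nsmul_eq_mul]
    ring
  refine ⟨L, r/2, half_pos hr, L.coe_nonneg, fun y hy => ?_⟩
  have hyr : ∀ z : Fin 3 → ℝ, ‖z‖ ≤ ‖y‖ → z ∈ t := by
    intro z hz
    apply hball
    rw [Metric.mem_ball, dist_zero_right]
    exact lt_of_le_of_lt (hz.trans hy) (by linarith)
  have hd2 : ∀ z ∈ Metric.closedBall (0 : Fin 3 → ℝ) ‖y‖,
      ‖fderiv ℝ (fderiv ℝ Γ) z - B‖ ≤ (L : ℝ) * ‖y‖ := by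
    intro z hz
    rw [Metric.mem_closedBall, dist_zero_right] at hz
    have := hL.dist_le_mul z (hyr z hz) 0 (hyr 0 (by simp))
    rw [dist_eq_norm, dist_zero_right] at this
    rw [← hBdef] at this
    exact this.trans (mul_le_mul_of_nonneg_left hz L.coe_nonneg)
  have hgd : ∀ z ∈ Metric.closedBall (0 : Fin 3 → ℝ) ‖y‖,
      ‖fderiv ℝ Γ z - fderiv ℝ Γ 0 - B z‖ ≤ ((L : ℝ) * ‖y‖ * ‖y‖) := by
    intro z hz
    have hmem0 : (0 : Fin 3 → ℝ) ∈ Metric.closedBall (0 : Fin 3 → ℝ) ‖y‖ := by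
      simp [norm_nonneg]
    have := Convex.norm_image_sub_le_of_norm_hasFDerivWithin_le'
      (f := fderiv ℝ Γ) (f' := fun w => fderiv ℝ (fderiv ℝ Γ) w) (φ := B)
      (s := Metric.closedBall (0 : Fin 3 → ℝ) ‖y‖) (C := (L : ℝ) * ‖y‖)
      (fun w hw => ((hΓ1.differentiable (by simp) w).hasFDerivAt).hasFDerivWithinAt)
      hd2 (convex_closedBall _ _) hmem0 hz
    rw [Metric.mem_closedBall, dist_zero_right] at hz
    simpa [sub_zero] using this.trans (by
      have : (L : ℝ) * ‖y‖ * ‖z - 0‖ ≤ (L : ℝ) * ‖y‖ * ‖y‖ := by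
        apply mul_le_mul_of_nonneg_left _ (by positivity)
        simpa using hz
      exact this)
  have hmem0 : (0 : Fin 3 → ℝ) ∈ Metric.closedBall (0 : Fin 3 → ℝ) ‖y‖ := by simp [norm_nonneg]
  have hmemy : y ∈ Metric.closedBall (0 : Fin 3 → ℝ) ‖y‖ := by simp
  have hfin := Convex.norm_image_sub_le_of_norm_hasFDerivWithin_le
    (f := g) (f' := fun z => fderiv ℝ Γ z - fderiv ℝ Γ 0 - B z)
    (s := Metric.closedBall (0 : Fin 3 → ℝ) ‖y‖) (C := (L : ℝ) * ‖y‖ * ‖y‖)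
    (fun z _ => (hg z).hasFDerivWithinAt) hgd (convex_closedBall _ _) hmem0 hmemy
  have hg0 : g 0 = 0 := by simp [hgdef, hΓ0]
  have : ‖g y‖ ≤ (L : ℝ) * ‖y‖ * ‖y‖ * ‖y‖ := by simpa [hg0] using hfin
  calc ‖g y‖ ≤ (L : ℝ) * ‖y‖ * ‖y‖ * ‖y‖ := this
    _ = (L : ℝ) * ‖y‖^3 := by ring

theorem parallel_transport_expansion
    (Γ : (Fin 3 → ℝ) → (Fin 3 → Fin 3 → Fin 3 → ℝ))
    (hΓ : ContDiff ℝ (⊤ : ℕ∞) Γ) (hΓ0 : Γ 0 = 0)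
    (V : Fin 3 → ℝ)
    (u : (Fin 3 → ℝ) → ℝ → (Fin 3 → ℝ))
    (hu0 : ∀ x, u x 0 = V)
    (hode : ∀ x, ∀ t ∈ Set.Icc (0 : ℝ) 1,
      HasDerivWithinAt (u x)
        (fun α => -∑ β, ∑ μ, x β * Γ (t • x) α β μ * u x t μ)
        (Set.Icc (0 : ℝ) 1) t) :
    (fun x : Fin 3 → ℝ =>
        (fun α => u x 1 α -
          (V α
            - (1 / 2) * ∑ ν, ∑ β, ∑ μ,
                (fderiv ℝ Γ 0 (Pi.single ν 1)) α β μ * x ν * x β * V μ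
            - (1 / 6) * ∑ σ', ∑ ν, ∑ β, ∑ μ,
                (fderiv ℝ (fderiv ℝ Γ) 0 (Pi.single σ' 1) (Pi.single ν 1)) α β μ
                  * x σ' * x ν * x β * V μ) : Fin 3 → ℝ))
      =O[nhds 0] fun x => ‖x‖ ^ 4 := by
  classical
  obtain ⟨L, r, hr, hL0, hrem⟩ := cubic_remainder Γ hΓ hΓ0
  obtain ⟨K, t, ht, hKlip⟩ := ((hΓ.contDiffAt (x := 0)).of_le (by simp)).exists_lipschitzOnWith
  obtain ⟨r₁, hr₁, hball₁⟩ := Metric.mem_nhds_iff.1 ht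
  have hΓbound : ∀ y : Fin 3 → ℝ, ‖y‖ < r₁ → ‖Γ y‖ ≤ (K : ℝ) * ‖y‖ := by
    intro y hy
    have h0 : (0 : Fin 3 → ℝ) ∈ t := hball₁ (Metric.mem_ball_self hr₁)
    have hyt : y ∈ t := hball₁ (by simpa [Metric.mem_ball, dist_zero_right] using hy)
    have := hKlip.dist_le_mul y hyt 0 h0
    simpa [dist_eq_norm, hΓ0] using this
  set D : (Fin 3 → ℝ) →L[ℝ] (Fin 3 → Fin 3 → Fin 3 → ℝ) := fderiv ℝ Γ 0 with hDdef
  set B := fderiv ℝ (fderiv ℝ Γ) 0 with hBdef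
  set δ : ℝ := min (min 1 (min r (r₁/2))) (1/(18*((K : ℝ)+1))) with hδdef
  have hδpos : 0 < δ := by
    have h1 : (0:ℝ) < 1/(18*((K : ℝ)+1)) := by positivity
    exact lt_min (lt_min one_pos (lt_min hr (by linarith))) h1
  rw [isBigO_iff]
  refine ⟨9*L*‖V‖ + 162*(K : ℝ)^2*‖V‖, ?_⟩
  filter_upwards [Metric.ball_mem_nhds (0 : Fin 3 → ℝ) hδpos] with x hx
  rw [Metric.mem_ball, dist_zero_right] at hx
  have hx1 : ‖x‖ ≤ 1 := (hx.le.trans (le_trans (min_le_left _ _) (min_le_left _ _)))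
  have hxr : ‖x‖ ≤ r :=
    hx.le.trans (le_trans (min_le_left _ _) (le_trans (min_le_right _ _) (min_le_left _ _)))
  have hxr₁ : ‖x‖ < r₁ := by
    have : δ ≤ r₁/2 :=
      le_trans (min_le_left _ _) (le_trans (min_le_right _ _) (min_le_right _ _))
    linarith
  have hxK : 9*(K : ℝ)*‖x‖^2 ≤ 1/2 := by
    have hδK : δ ≤ 1/(18*((K : ℝ)+1)) := min_le_right _ _
    have hK0 : (0:ℝ) ≤ K := K.coe_nonneg
    have h1 : ‖x‖^2 ≤ ‖x‖ := by nlinarith [norm_nonneg x]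
    have h2 : (K:ℝ) * ‖x‖ ≤ (K:ℝ) * (1/(18*((K : ℝ)+1))) :=
      mul_le_mul_of_nonneg_left (by linarith) hK0
    have h3 : (K:ℝ) * (1/(18*((K : ℝ)+1))) ≤ 1/18 := by
      rw [mul_one_div, div_le_div_iff₀ (by positivity) (by norm_num)]
      nlinarith
    nlinarith [norm_nonneg x]
  -- norms of s • x
  have hsx : ∀ s ∈ Set.Icc (0:ℝ) 1, ‖s • x‖ ≤ ‖x‖ := by
    intro s hs
    rw [norm_smul, Real.norm_eq_abs, abs_of_nonneg hs.1]
    nlinarith [norm_nonneg x, hs.2]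
  have hcont : ContinuousOn (u x) (Set.Icc (0:ℝ) 1) :=
    fun s hs => (hode x s hs).continuousWithinAt
  set fI : ℝ → (Fin 3 → ℝ) :=
    fun s => fun α => -∑ β, ∑ μ, x β * Γ (s • x) α β μ * u x s μ with hfIdef
  have hfc : ContinuousOn fI (Set.Icc (0:ℝ) 1) := by
    rw [continuousOn_pi]
    intro α
    apply ContinuousOn.neg
    apply continuousOn_finset_sum
    intro β _
    apply continuousOn_finset_sum
    intro μ _
    have hΓs : Continuous fun s : ℝ => Γ (s • x) α β μ := by
      have h1 : Continuous fun s : ℝ => s • x := continuous_id.smul continuous_const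
      exact (continuous_apply μ).comp ((continuous_apply β).comp
        ((continuous_apply α).comp (hΓ.continuous.comp h1)))
    have hus : ContinuousOn (fun s : ℝ => u x s μ) (Set.Icc (0:ℝ) 1) :=
      (continuous_apply μ).comp_continuousOn hcont
    exact ((continuous_const.mul hΓs).continuousOn.mul hus)
  have hInt : ∀ t' ∈ Set.Icc (0:ℝ) 1, IntervalIntegrable fI MeasureTheory.volume 0 t' := by
    intro t' ht'
    apply ContinuousOn.intervalIntegrable
    apply hfc.mono
    rw [Set.uIcc_of_le ht'.1]
    exact Set.Icc_subset_Icc le_rfl ht'.2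
  have hIE : ∀ t' ∈ Set.Icc (0:ℝ) 1, ∫ s in (0:ℝ)..t', fI s = u x t' - V := by
    intro t' ht'
    have hd : ∀ s ∈ Set.Ioo (0:ℝ) t', HasDerivWithinAt (u x) (fI s) (Set.Ioi s) s := by
      intro s hs
      have hsI : s ∈ Set.Icc (0:ℝ) 1 := ⟨hs.1.le, (hs.2.trans_le ht'.2).le⟩
      exact (hode x s hsI).mono_of_mem_nhdsWithin (Icc_mem_nhdsGT_of_mem ⟨hs.1.le, hs.2.trans_le ht'.2⟩)
    have := intervalIntegral.integral_eq_sub_of_hasDeriv_right_of_le ht'.1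
      (hcont.mono (Set.Icc_subset_Icc le_rfl ht'.2)) hd (hInt t' ht')
    rw [this, hu0]
  
  -- componentwise bound for the ODE right-hand side
  have hfb : ∀ s ∈ Set.Icc (0:ℝ) 1, ∀ W : ℝ, 0 ≤ W → (∀ μ, |u x s μ| ≤ W) →
      ‖fI s‖ ≤ 9*(K:ℝ)*‖x‖^2*W := by
    intro s hs W hW0 hW
    have hΓs : ∀ α β μ : Fin 3, |Γ (s • x) α β μ| ≤ (K:ℝ)*‖x‖ := by
      intro α β μ
      refine (comp_abs_le _ α β μ).trans ?_
      refine (hΓbound _ (lt_of_le_of_lt (hsx s hs) hxr₁)).trans ?_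
      exact mul_le_mul_of_nonneg_left (hsx s hs) K.coe_nonneg
    rw [pi_norm_le_iff_of_nonneg (by positivity)]
    intro α
    rw [hfIdef]
    simp only [Real.norm_eq_abs, abs_neg]
    calc |∑ β, ∑ μ, x β * Γ (s • x) α β μ * u x s μ|
        ≤ ∑ β, ∑ μ, |x β * Γ (s • x) α β μ * u x s μ| := by
          refine (Finset.abs_sum_le_sum_abs _ _).trans ?_
          exact Finset.sum_le_sum fun β _ => Finset.abs_sum_le_sum_abs _ _
      _ ≤ ∑ _β : Fin 3, ∑ _μ : Fin 3, ‖x‖ * ((K:ℝ)*‖x‖) * W := by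
          refine Finset.sum_le_sum fun β _ => Finset.sum_le_sum fun μ _ => ?_
          rw [abs_mul, abs_mul]
          exact mul_le_mul (mul_le_mul (vec_abs_le x β) (hΓs α β μ) (abs_nonneg _)
            (norm_nonneg _)) (hW μ) (abs_nonneg _) (by positivity)
      _ = 9*(K:ℝ)*‖x‖^2*W := by
          simp only [Finset.sum_const, Finset.card_univ, Fintype.card_fin, nsmul_eq_mul]
          push_cast
          ring
  -- a priori bound on u
  obtain ⟨t₀, ht₀I, hmax⟩ := isCompact_Icc.exists_isMaxOn (Set.nonempty_Icc.mpr zero_le_one)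
    hcont.norm
  have hM : ∀ s ∈ Set.Icc (0:ℝ) 1, ‖u x s‖ ≤ ‖u x t₀‖ := fun s hs => hmax hs
  have hM0 : (0:ℝ) ≤ ‖u x t₀‖ := norm_nonneg _
  have hfbM : ∀ s ∈ Set.Icc (0:ℝ) 1, ‖fI s‖ ≤ 9*(K:ℝ)*‖x‖^2*‖u x t₀‖ := fun s hs =>
    hfb s hs _ hM0 fun μ => (vec_abs_le _ μ).trans (hM s hs)
  have hM2 : ‖u x t₀‖ ≤ 2*‖V‖ := by
    have h1 := hIE t₀ ht₀I
    have h2 : ‖∫ s in (0:ℝ)..t₀, fI s‖ ≤ 9*(K:ℝ)*‖x‖^2*‖u x t₀‖ * |t₀ - 0| := by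
      refine intervalIntegral.norm_integral_le_of_norm_le_const fun s hs => ?_
      rw [Set.uIoc_of_le ht₀I.1] at hs
      exact hfbM s ⟨hs.1.le, hs.2.trans ht₀I.2⟩
    have h3 : |t₀ - 0| ≤ 1 := by
      rw [sub_zero, abs_of_nonneg ht₀I.1]; exact ht₀I.2
    have h4 : u x t₀ = V + ∫ s in (0:ℝ)..t₀, fI s := by rw [h1]; abel
    have h5 : ‖u x t₀‖ ≤ ‖V‖ + 9*(K:ℝ)*‖x‖^2*‖u x t₀‖ * |t₀ - 0| := by
      conv_lhs => rw [h4]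
      exact (norm_add_le _ _).trans (add_le_add_right h2 _)
    have h6 : 9*(K:ℝ)*‖x‖^2*‖u x t₀‖ * |t₀ - 0| ≤ (1/2) * ‖u x t₀‖ := by
      have h0 : (0:ℝ) ≤ 9*(K:ℝ)*‖x‖^2*‖u x t₀‖ := by positivity
      have ha : 9*(K:ℝ)*‖x‖^2*‖u x t₀‖ * |t₀ - 0| ≤ 9*(K:ℝ)*‖x‖^2*‖u x t₀‖ := by
        calc 9*(K:ℝ)*‖x‖^2*‖u x t₀‖ * |t₀ - 0| ≤ 9*(K:ℝ)*‖x‖^2*‖u x t₀‖ * 1 :=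
              mul_le_mul_of_nonneg_left h3 h0
          _ = 9*(K:ℝ)*‖x‖^2*‖u x t₀‖ := mul_one _
      have hb : 9*(K:ℝ)*‖x‖^2*‖u x t₀‖ ≤ (1/2) * ‖u x t₀‖ :=
        mul_le_mul_of_nonneg_right hxK hM0
      linarith
    linarith
  -- deviation of u from V
  have hdev : ∀ s ∈ Set.Icc (0:ℝ) 1, ‖u x s - V‖ ≤ 18*(K:ℝ)*‖V‖*‖x‖^2 := by
    intro s hs
    rw [← hIE s hs]
    have h2 : ‖∫ τ in (0:ℝ)..s, fI τ‖ ≤ 9*(K:ℝ)*‖x‖^2*(2*‖V‖) * |s - 0| := by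
      refine intervalIntegral.norm_integral_le_of_norm_le_const fun τ hτ => ?_
      rw [Set.uIoc_of_le hs.1] at hτ
      refine (hfbM τ ⟨hτ.1.le, hτ.2.trans hs.2⟩).trans ?_
      have h0 : (0:ℝ) ≤ 9*(K:ℝ)*‖x‖^2 := by positivity
      exact mul_le_mul_of_nonneg_left hM2 h0
    have h3 : |s - 0| ≤ 1 := by rw [sub_zero, abs_of_nonneg hs.1]; exact hs.2
    refine h2.trans ?_
    have h0 : (0:ℝ) ≤ 9*(K:ℝ)*‖x‖^2*(2*‖V‖) := by positivity
    calc 9*(K:ℝ)*‖x‖^2*(2*‖V‖) * |s - 0| ≤ 9*(K:ℝ)*‖x‖^2*(2*‖V‖) * 1 :=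
          mul_le_mul_of_nonneg_left h3 h0
      _ = 18*(K:ℝ)*‖V‖*‖x‖^2 := by ring
  -- component formulas for D x and (B x) x
  have hDx : ∀ α β μ : Fin 3, (D x) α β μ = ∑ ν, x ν * (D (Pi.single ν 1)) α β μ := by
    intro α β μ
    rw [clm_sum D x]
    simp [Finset.sum_apply]
  have hBxx : ∀ α β μ : Fin 3, ((B x) x) α β μ
      = ∑ σ', ∑ ν, x σ' * x ν * ((B (Pi.single σ' 1)) (Pi.single ν 1)) α β μ := by
    intro α β μ
    have h1 : (B x) x = ∑ σ', x σ' • ((B (Pi.single σ' 1)) x) := by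
      rw [clm_sum B x]
      simp [ContinuousLinearMap.sum_apply, ContinuousLinearMap.smul_apply]
    rw [h1]
    simp only [Finset.sum_apply, Pi.smul_apply, smul_eq_mul]
    refine Finset.sum_congr rfl fun σ' _ => ?_
    rw [clm_sum (B (Pi.single σ' 1)) x]
    simp [Finset.sum_apply, Finset.mul_sum, mul_assoc]
  -- main coefficient vectors
  set c1 : Fin 3 → ℝ := fun α => -∑ β, ∑ μ, x β * (D x) α β μ * V μ with hc1
  set c2 : Fin 3 → ℝ := fun α => -((1/2) * ∑ β, ∑ μ, x β * ((B x) x) α β μ * V μ) with hc2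
  have hPint1 : IntervalIntegrable (fun s : ℝ => s • c1) MeasureTheory.volume 0 1 :=
    (continuous_id.smul continuous_const).intervalIntegrable 0 1
  have hPint2 : IntervalIntegrable (fun s : ℝ => s^2 • c2) MeasureTheory.volume 0 1 :=
    ((continuous_pow 2).smul continuous_const).intervalIntegrable 0 1
  have hone : (1:ℝ) ∈ Set.Icc (0:ℝ) 1 := ⟨zero_le_one, le_rfl⟩
  have hPval : (∫ s in (0:ℝ)..1, (s • c1 + s^2 • c2)) = (1/2:ℝ) • c1 + (1/3:ℝ) • c2 := by
    rw [intervalIntegral.integral_add hPint1 hPint2, intervalIntegral.integral_smul_const,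
      intervalIntegral.integral_smul_const, integral_id, integral_pow]
    norm_num
  -- sum re-indexing identities
  have e4 : ∀ α, (∑ ν, ∑ β, ∑ μ, (D (Pi.single ν 1)) α β μ * x ν * x β * V μ)
      = ∑ β, ∑ μ, x β * (D x) α β μ * V μ := by
    intro α
    conv_lhs => rw [Finset.sum_comm]
    refine Finset.sum_congr rfl fun β _ => ?_
    conv_lhs => rw [Finset.sum_comm]
    refine Finset.sum_congr rfl fun μ _ => ?_
    rw [hDx α β μ, Finset.mul_sum, Finset.sum_mul]
    refine Finset.sum_congr rfl fun ν _ => ?_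
    ring
  have e5 : ∀ α, (∑ σ', ∑ ν, ∑ β, ∑ μ,
        ((B (Pi.single σ' 1)) (Pi.single ν 1)) α β μ * x σ' * x ν * x β * V μ)
      = ∑ β, ∑ μ, x β * ((B x) x) α β μ * V μ := by
    intro α
    have swap1 : ∀ (f : Fin 3 → Fin 3 → Fin 3 → Fin 3 → ℝ),
        (∑ a, ∑ b, ∑ c, ∑ d, f a b c d) = ∑ c, ∑ d, ∑ a, ∑ b, f a b c d := by
      intro f
      simp only [Fin.sum_univ_three]
      ring
    rw [swap1]
    refine Finset.sum_congr rfl fun β _ => ?_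
    refine Finset.sum_congr rfl fun μ _ => ?_
    rw [hBxx α β μ, Finset.mul_sum, Finset.sum_mul]
    refine Finset.sum_congr rfl fun σ' _ => ?_
    rw [Finset.mul_sum, Finset.sum_mul]
    refine Finset.sum_congr rfl fun ν _ => ?_
    ring
  -- the target function equals an interval integral
  have hintfI := hInt 1 hone
  have hPint : IntervalIntegrable (fun s : ℝ => s • c1 + s^2 • c2) MeasureTheory.volume 0 1 :=
    hPint1.add hPint2
  have hTeq : (fun α => u x 1 α -
          (V α
            - (1 / 2) * ∑ ν, ∑ β, ∑ μ, (D (Pi.single ν 1)) α β μ * x ν * x β * V μ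
            - (1 / 6) * ∑ σ', ∑ ν, ∑ β, ∑ μ,
                ((B (Pi.single σ' 1)) (Pi.single ν 1)) α β μ * x σ' * x ν * x β * V μ))
      = ∫ s in (0:ℝ)..1, (fI s - (s • c1 + s^2 • c2)) := by
    rw [intervalIntegral.integral_sub hintfI hPint, hPval, hIE 1 hone]
    funext α
    simp only [Pi.sub_apply, Pi.add_apply, Pi.smul_apply, smul_eq_mul]
    rw [e4 α, e5 α, hc1, hc2]
    ring
  -- pointwise error bound
  have herr : ∀ s ∈ Set.uIoc (0:ℝ) 1,
      ‖fI s - (s • c1 + s^2 • c2)‖ ≤ (9*L*‖V‖ + 162*(K:ℝ)^2*‖V‖) * ‖x‖^4 := by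
    intro s hs
    rw [Set.uIoc_of_le zero_le_one] at hs
    have hsI : s ∈ Set.Icc (0:ℝ) 1 := ⟨hs.1.le, hs.2⟩
    have key : ∀ α, fI s α - (s • c1 + s^2 • c2) α
        = ∑ β, ∑ μ, (-(x β * ((Γ (s • x) - D (s • x) - (1/2:ℝ) • (B (s • x)) (s • x)) α β μ * V μ
            + Γ (s • x) α β μ * (u x s μ - V μ)))) := by
      intro α
      have hDs : ∀ β μ : Fin 3, (D (s • x)) α β μ = s * (D x) α β μ := by
        intro β μ
        rw [map_smul]
        simp
      have hBs : ∀ β μ : Fin 3, ((B (s • x)) (s • x)) α β μ = s^2 * ((B x) x) α β μ := by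
        intro β μ
        rw [map_smul]
        simp only [ContinuousLinearMap.smul_apply, map_smul, Pi.smul_apply, smul_eq_mul]
        ring
      have hterm : ∀ β μ : Fin 3,
          (-(x β * ((Γ (s • x) - D (s • x) - (1/2:ℝ) • (B (s • x)) (s • x)) α β μ * V μ
              + Γ (s • x) α β μ * (u x s μ - V μ))))
          = s * (x β * (D x) α β μ * V μ) + (s^2*(1/2)) * (x β * ((B x) x) α β μ * V μ)
            - x β * Γ (s • x) α β μ * u x s μ := by
        intro β μ
        simp only [Pi.sub_apply, Pi.smul_apply, smul_eq_mul, hDs, hBs]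
        ring
      simp only [hterm]
      rw [show (∑ β, ∑ μ, (s * (x β * (D x) α β μ * V μ)
            + (s^2*(1/2)) * (x β * ((B x) x) α β μ * V μ)
            - x β * Γ (s • x) α β μ * u x s μ))
          = s * (∑ β, ∑ μ, x β * (D x) α β μ * V μ)
            + (s^2*(1/2)) * (∑ β, ∑ μ, x β * ((B x) x) α β μ * V μ)
            - ∑ β, ∑ μ, x β * Γ (s • x) α β μ * u x s μ from by
        simp [Finset.sum_add_distrib, Finset.sum_sub_distrib, Finset.mul_sum]]
      simp only [hfIdef, hc1, hc2, Pi.add_apply, Pi.smul_apply, smul_eq_mul]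
      ring
    have hRb : ‖Γ (s • x) - D (s • x) - (1/2:ℝ) • (B (s • x)) (s • x)‖ ≤ L * ‖x‖^3 := by
      refine (hrem (s • x) ((hsx s hsI).trans hxr)).trans ?_
      exact mul_le_mul_of_nonneg_left (pow_le_pow_left₀ (norm_nonneg _) (hsx s hsI) 3) hL0
    have hΓs : ∀ α β μ : Fin 3, |Γ (s • x) α β μ| ≤ (K:ℝ)*‖x‖ := by
      intro α β μ
      refine (comp_abs_le _ α β μ).trans ?_
      refine (hΓbound _ (lt_of_le_of_lt (hsx s hsI) hxr₁)).trans ?_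
      exact mul_le_mul_of_nonneg_left (hsx s hsI) K.coe_nonneg
    rw [pi_norm_le_iff_of_nonneg (by positivity)]
    intro α
    rw [Pi.sub_apply, Real.norm_eq_abs, key α]
    calc |∑ β, ∑ μ, (-(x β * ((Γ (s • x) - D (s • x) - (1/2:ℝ) • (B (s • x)) (s • x)) α β μ * V μ
            + Γ (s • x) α β μ * (u x s μ - V μ))))|
        ≤ ∑ β, ∑ μ, |(-(x β * ((Γ (s • x) - D (s • x) - (1/2:ℝ) • (B (s • x)) (s • x)) α β μ * V μ
            + Γ (s • x) α β μ * (u x s μ - V μ))))| := by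
          refine (Finset.abs_sum_le_sum_abs _ _).trans ?_
          exact Finset.sum_le_sum fun β _ => Finset.abs_sum_le_sum_abs _ _
      _ ≤ ∑ _β : Fin 3, ∑ _μ : Fin 3,
            ‖x‖ * (L * ‖x‖^3 * ‖V‖ + (K:ℝ)*‖x‖ * (18*(K:ℝ)*‖V‖*‖x‖^2)) := by
          refine Finset.sum_le_sum fun β _ => Finset.sum_le_sum fun μ _ => ?_
          rw [abs_neg, abs_mul]
          refine mul_le_mul (vec_abs_le x β) ?_ (abs_nonneg _) (norm_nonneg _)
          refine (abs_add_le _ _).trans ?_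
          gcongr
          · rw [abs_mul]
            refine mul_le_mul (comp_abs_le _ α β μ |>.trans hRb) ?_ (abs_nonneg _) (by positivity)
            exact vec_abs_le V μ
          · rw [abs_mul]
            refine mul_le_mul (hΓs α β μ) ?_ (abs_nonneg _) (by positivity)
            exact (vec_abs_le _ μ).trans (hdev s hsI)
      _ = (9*L*‖V‖ + 162*(K:ℝ)^2*‖V‖) * ‖x‖^4 := by
          simp only [Finset.sum_const, Finset.card_univ, Fintype.card_fin, nsmul_eq_mul]
          push_cast
          ring
  -- conclude
  rw [hTeq]
  have hfinal := intervalIntegral.norm_integral_le_of_norm_le_const herr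
  have hnorm4 : ‖‖x‖^4‖ = ‖x‖^4 := by
    rw [Real.norm_eq_abs, abs_of_nonneg (by positivity)]
  rw [hnorm4]
  calc ‖∫ s in (0:ℝ)..1, (fI s - (s • c1 + s^2 • c2))‖
      ≤ (9*L*‖V‖ + 162*(K:ℝ)^2*‖V‖) * ‖x‖^4 * |1 - 0| := hfinal
    _ = (9*L*‖V‖ + 162*(K:ℝ)^2*‖V‖) * ‖x‖^4 := by norm_num
end
end
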